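/- Sequence-level uniqueness from modulo samples: let λ > 0 and N ≥ 1, and let γ, η : ℤ → ℝ be sequences such that (i) M_λ(γ_k) = M_λ(η_k) for all k ∈ ℤ, (ii) −λ ≤ (Δ^N γ)_k < λ and −λ ≤ (Δ^N η)_k < λ for all k ∈ ℤ, and (iii) the difference sequence γ − η is bounded. Then there exists a single integer m such that η_k = γ_k + 2λ·m for all k ∈ ℤ; that is, the samples are determined by their modulo samples up to an additive constant multiple of 2λ. -/

import Mathlib

/-! Since `M_λ` is reduction modulo `2λ`, the difference `d = η - γ` takes values in `2λℤ`, and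
so does its `N`-th difference. That difference is `Δ^N η - Δ^N γ ∈ (-2λ, 2λ)`, hence zero. A bounded
sequence with vanishing `N`-th difference is constant: by induction on `N`, `Δd` is constant, so
`d` grows linearly, which boundedness rules out unless the slope is zero. -/

/-- Centered modulo map `M_λ(t) = 2λ(⟨t/(2λ) + 1/2⟩ - 1/2)`. -/
noncomputable def Mlam (l t : ℝ) : ℝ := 2 * l * (Int.fract (t / (2 * l) + 1 / 2) - 1 / 2)

/-- First-order finite difference of a sequence. -/
def fdiff (a : ℤ → ℝ) : ℤ → ℝ := fun k => a (k + 1) - a k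

lemma sub_mem_zmultiples_of_Mlam_eq {l x y : ℝ} (hl : l ≠ 0) (h : Mlam l x = Mlam l y) :
    y - x ∈ AddSubgroup.zmultiples (2 * l) := by
  have hl2 : 2 * l ≠ 0 := mul_ne_zero two_ne_zero hl
  have hfract : Int.fract (y / (2 * l) + 1 / 2) = Int.fract (x / (2 * l) + 1 / 2) := by
    unfold Mlam at h
    linarith [mul_left_cancel₀ hl2 h]
  obtain ⟨z, hz⟩ := Int.fract_eq_fract.mp hfract
  refine AddSubgroup.mem_zmultiples_iff.mpr ⟨z, ?_⟩
  field_simp at hz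
  rw [zsmul_eq_mul]
  linarith

lemma eq_zero_of_mem_zmultiples_of_abs_lt {p x : ℝ} (hx : x ∈ AddSubgroup.zmultiples p)
    (h : |x| < |p|) : x = 0 := by
  obtain ⟨z, rfl⟩ := AddSubgroup.mem_zmultiples_iff.mp hx
  rw [zsmul_eq_mul, abs_mul] at h
  have hz : |(z : ℝ)| < 1 := lt_of_mul_lt_mul_right (by simpa using h) (abs_nonneg p)
  rw [Int.abs_lt_one_iff.mp (by exact_mod_cast hz : |z| < 1), zero_smul]

lemma fdiff_iterate_sub (N : ℕ) (a b : ℤ → ℝ) :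
    fdiff^[N] (a - b) = fdiff^[N] a - fdiff^[N] b := by
  change (fwdDiff 1)^[N] (a - b) = (fwdDiff 1)^[N] a - (fwdDiff 1)^[N] b
  rw [← fwdDiff_aux.coe_fwdDiffₗ_pow]
  exact map_sub _ a b

lemma fdiff_iterate_mem {S : AddSubgroup ℝ} {a : ℤ → ℝ} (h : ∀ k, a k ∈ S) (N : ℕ) (k : ℤ) :
    fdiff^[N] a k ∈ S := by
  induction N generalizing a with
  | zero => exact h k
  | succ n ih =>
    rw [Function.iterate_succ_apply]
    exact ih fun j => S.sub_mem (h (j + 1)) (h j)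

lemma abs_fdiff_le {a : ℤ → ℝ} {B : ℝ} (hB : ∀ k, |a k| ≤ B) (k : ℤ) : |fdiff a k| ≤ 2 * B :=
  (abs_sub _ _).trans (by linarith [hB (k + 1), hB k])

lemma eq_zero_of_forall_abs_nat_mul_le {c B : ℝ} (h : ∀ n : ℕ, |n * c| ≤ B) : c = 0 := by
  by_contra hc
  obtain ⟨n, hn⟩ := exists_nat_gt (B / |c|)
  have := h n
  rw [abs_mul, Nat.abs_cast, ← le_div_iff₀ (abs_pos.mpr hc)] at this
  linarith

lemma eq_zero_of_bounded_of_fdiff_eq_const {a : ℤ → ℝ} {B c : ℝ} (hB : ∀ k, |a k| ≤ B)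
    (hc : ∀ k, fdiff a k = c) : c = 0 := by
  have hlin : ∀ n : ℕ, a n = a 0 + n * c := by
    intro n
    induction n with
    | zero => simp
    | succ n ih =>
      have := hc n
      unfold fdiff at this
      push_cast at this ⊢
      linarith
  refine eq_zero_of_forall_abs_nat_mul_le (B := 2 * B) fun n => ?_
  rw [show (n : ℝ) * c = a n - a 0 by linarith [hlin n]]
  exact (abs_sub _ _).trans (by linarith [hB n, hB 0])

lemma eq_of_fdiff_eq_zero {a : ℤ → ℝ} (h : ∀ k, fdiff a k = 0) (k : ℤ) : a k = a 0 := by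
  have hper : Function.Periodic a 1 := fun j => sub_eq_zero.mp (h j)
  simpa using hper.int_mul_eq k

theorem eq_of_bounded_of_fdiff_iterate_eq_zero {a : ℤ → ℝ} {B : ℝ} (hB : ∀ k, |a k| ≤ B)
    (N : ℕ) (h : ∀ k, fdiff^[N] a k = 0) (k : ℤ) : a k = a 0 := by
  induction N generalizing a B k with
  | zero => simp_all
  | succ n ih =>
    have hconst : ∀ j, fdiff a j = fdiff a 0 :=
      ih (abs_fdiff_le hB) fun j => by rw [← Function.iterate_succ_apply, h]
    have hzero : fdiff a 0 = 0 := eq_zero_of_bounded_of_fdiff_eq_const hB hconst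
    exact eq_of_fdiff_eq_zero (fun j => (hconst j).trans hzero) k

theorem uniqueness_from_modulo_samples_general (l : ℝ) (hl : 0 < l) (N : ℕ)
    (γ η : ℤ → ℝ)
    (hmod : ∀ k : ℤ, Mlam l (γ k) = Mlam l (η k))
    (hγ : ∀ k : ℤ, -l ≤ (fdiff^[N] γ) k ∧ (fdiff^[N] γ) k < l)
    (hη : ∀ k : ℤ, -l ≤ (fdiff^[N] η) k ∧ (fdiff^[N] η) k < l)
    (hbdd : ∃ B : ℝ, ∀ k : ℤ, |γ k - η k| ≤ B) :
    ∃ m : ℤ, ∀ k : ℤ, η k = γ k + 2 * l * m := by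
  obtain ⟨B, hB⟩ := hbdd
  have hd_mem : ∀ k, (η - γ) k ∈ AddSubgroup.zmultiples (2 * l) :=
    fun k => sub_mem_zmultiples_of_Mlam_eq hl.ne' (hmod k)
  have hd_bdd : ∀ k, |(η - γ) k| ≤ B := fun k => by rw [Pi.sub_apply, abs_sub_comm]; exact hB k
  have hΔd : ∀ k, fdiff^[N] (η - γ) k = 0 := by
    intro k
    refine eq_zero_of_mem_zmultiples_of_abs_lt (fdiff_iterate_mem hd_mem N k) ?_
    rw [fdiff_iterate_sub, Pi.sub_apply, abs_of_pos (by linarith : (0 : ℝ) < 2 * l), abs_sub_lt_iff]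
    constructor <;> linarith [hγ k, hη k]
  obtain ⟨m, hm⟩ := hd_mem 0
  refine ⟨m, fun k => ?_⟩
  have hk := eq_of_bounded_of_fdiff_iterate_eq_zero hd_bdd N hΔd k
  simp only [Pi.sub_apply, ← hm, zsmul_eq_mul] at hk
  linarith

/-- sequence-level uniqueness from modulo samples. -/
theorem uniqueness_from_modulo_samples (l : ℝ) (hl : 0 < l) (N : ℕ) (hN : 1 ≤ N)
    (γ η : ℤ → ℝ)
    (hmod : ∀ k : ℤ, Mlam l (γ k) = Mlam l (η k))
    (hγ : ∀ k : ℤ, -l ≤ (fdiff^[N] γ) k ∧ (fdiff^[N] γ) k < l)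
    (hη : ∀ k : ℤ, -l ≤ (fdiff^[N] η) k ∧ (fdiff^[N] η) k < l)
    (hbdd : ∃ B : ℝ, ∀ k : ℤ, |γ k - η k| ≤ B) :
    ∃ m : ℤ, ∀ k : ℤ, η k = γ k + 2 * l * m :=
  uniqueness_from_modulo_samples_general l hl N γ η hmod hγ hη hbdd
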